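/- arXiv:math/0602496 — 3 statements merged into one kernel-verified Lean document; each statement's English description precedes it below -/
import Mathlib

section
/- Let g(x)=e^{-x²/2}/√(2π) and G(x)=∫_{-∞}^x g(u)du, with inverse G⁻¹:(0,1)→R. Then g(G⁻¹(y)) ~ y·√(−2 log y) as y→0⁺, and g(G⁻¹(y)) ~ (1−y)·√(−2 log(1−y)) as y→1⁻. -/
/-!
By L'Hôpital's rule, `G(x) ~ g(x) / |x|` as `x → -∞` (Mills' ratio). Taking logarithms,
`-2 log G(x) = x² + O(log |x|) ~ x²`, so `√(-2 log G(x)) ~ |x|` and therefore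
`G(x) √(-2 log G(x)) ~ g(x)`. Substituting `x = G⁻¹(y)`, which tends to `-∞` as `y → 0⁺`, gives
the first limit; the second follows from `G⁻¹(1 - y) = -G⁻¹(y)` and the evenness of `g`.
-/

open MeasureTheory Real Set Filter
open scoped Topology

noncomputable section

/-- The standard Gaussian density `g(x) = e^{-x²/2}/√(2π)`. -/
def gaussPDF (x : ℝ) : ℝ := Real.exp (-x^2/2) / Real.sqrt (2*Real.pi)

/-- The standard Gaussian cumulative distribution function `G(x) = ∫_{-∞}^x g`. -/
def gaussCDF (x : ℝ) : ℝ := ∫ u in Set.Iic x, gaussPDF u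

/-- The inverse `G⁻¹ : (0,1) → ℝ` of the standard Gaussian CDF (`G` is a strictly
increasing continuous bijection from `ℝ` onto `(0,1)`). -/
def gaussCDFInv (y : ℝ) : ℝ := sSup {x | gaussCDF x ≤ y}

open Asymptotics

lemma gaussPDF_eq_gaussianPDFReal : gaussPDF = ProbabilityTheory.gaussianPDFReal 0 1 := by
  ext x
  simp [gaussPDF, ProbabilityTheory.gaussianPDFReal, div_eq_inv_mul]

lemma gaussPDF_pos (x : ℝ) : 0 < gaussPDF x := by
  rw [gaussPDF_eq_gaussianPDFReal]
  exact ProbabilityTheory.gaussianPDFReal_pos _ _ _ one_ne_zero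

lemma integrable_gaussPDF : Integrable gaussPDF := by
  rw [gaussPDF_eq_gaussianPDFReal]
  exact ProbabilityTheory.integrable_gaussianPDFReal _ _

lemma integral_gaussPDF : ∫ x, gaussPDF x = 1 := by
  rw [gaussPDF_eq_gaussianPDFReal]
  exact ProbabilityTheory.integral_gaussianPDFReal_eq_one _ one_ne_zero

lemma gaussPDF_neg (x : ℝ) : gaussPDF (-x) = gaussPDF x := by
  simp [gaussPDF]

lemma hasDerivAt_gaussPDF (x : ℝ) : HasDerivAt gaussPDF (-x * gaussPDF x) x := by
  have h : HasDerivAt (fun u : ℝ => -u ^ 2 / 2) (-x) x :=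
    ((hasDerivAt_pow 2 x).neg.div_const 2).congr_deriv (by push_cast; ring)
  exact (h.exp.div_const (√(2 * π))).congr_deriv (by rw [gaussPDF]; ring)

lemma continuous_gaussPDF : Continuous gaussPDF :=
  continuous_iff_continuousAt.2 fun x => (hasDerivAt_gaussPDF x).continuousAt

lemma log_gaussPDF (x : ℝ) : log (gaussPDF x) = -x ^ 2 / 2 - log √(2 * π) := by
  rw [gaussPDF, log_div (exp_ne_zero _) (by positivity), log_exp]

lemma tendsto_gaussPDF_atBot : Tendsto gaussPDF atBot (𝓝 0) := by
  have h : Tendsto (fun x : ℝ => -x ^ 2 / 2) atBot atBot :=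
    (tendsto_neg_atTop_atBot.comp ((tendsto_pow_atTop two_ne_zero).comp
      tendsto_neg_atBot_atTop)).atBot_div_const two_pos |>.congr fun x => by simp [neg_div]
  have := (tendsto_exp_atBot.comp h).div_const (√(2 * π))
  rwa [zero_div] at this

lemma gaussCDF_sub_gaussCDF (a b : ℝ) : gaussCDF b - gaussCDF a = ∫ u in a..b, gaussPDF u :=
  intervalIntegral.integral_Iic_sub_Iic integrable_gaussPDF.integrableOn
    integrable_gaussPDF.integrableOn

lemma hasDerivAt_gaussCDF (x : ℝ) : HasDerivAt gaussCDF (gaussPDF x) x := by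
  have h : gaussCDF = fun y => gaussCDF 0 + ∫ u in (0 : ℝ)..y, gaussPDF u := by
    ext y
    rw [← gaussCDF_sub_gaussCDF, add_sub_cancel]
  rw [h]
  exact (intervalIntegral.integral_hasDerivAt_right (continuous_gaussPDF.intervalIntegrable 0 x)
    (continuous_gaussPDF.stronglyMeasurableAtFilter _ _)
    continuous_gaussPDF.continuousAt).const_add _

lemma continuous_gaussCDF : Continuous gaussCDF :=
  continuous_iff_continuousAt.2 fun x => (hasDerivAt_gaussCDF x).continuousAt

lemma strictMono_gaussCDF : StrictMono gaussCDF :=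
  strictMono_of_hasDerivAt_pos hasDerivAt_gaussCDF gaussPDF_pos

lemma gaussCDF_neg (x : ℝ) : gaussCDF (-x) = 1 - gaussCDF x := by
  have h : gaussCDF (-x) = ∫ u in Ioi x, gaussPDF u := by
    rw [gaussCDF, ← integral_comp_neg_Ioi]
    exact setIntegral_congr_fun measurableSet_Ioi fun u _ => gaussPDF_neg u
  rw [h, ← integral_gaussPDF, ← intervalIntegral.integral_Iic_add_Ioi
    integrable_gaussPDF.integrableOn integrable_gaussPDF.integrableOn, gaussCDF,
    add_sub_cancel_left]

lemma tendsto_gaussCDF_atBot : Tendsto gaussCDF atBot (𝓝 0) := by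
  have h := tendsto_const_nhds (x := gaussCDF 0) |>.sub <|
    intervalIntegral_tendsto_integral_Iic 0 integrable_gaussPDF.integrableOn tendsto_id
  rw [← gaussCDF, sub_self] at h
  exact h.congr fun x => by rw [← gaussCDF_sub_gaussCDF, sub_sub_cancel, id]

lemma tendsto_gaussCDF_atTop : Tendsto gaussCDF atTop (𝓝 1) := by
  have h := (tendsto_gaussCDF_atBot.comp tendsto_neg_atTop_atBot).const_sub 1
  rw [sub_zero] at h
  exact h.congr fun x => by rw [Function.comp_apply, gaussCDF_neg, sub_sub_cancel]

lemma gaussCDF_pos (x : ℝ) : 0 < gaussCDF x :=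
  (strictMono_gaussCDF.monotone.le_of_tendsto tendsto_gaussCDF_atBot (x - 1)).trans_lt
    (strictMono_gaussCDF (sub_one_lt x))

lemma gaussCDF_lt_one (x : ℝ) : gaussCDF x < 1 := by
  linarith [gaussCDF_pos (-x), gaussCDF_neg x]

lemma exists_gaussCDF_eq {y : ℝ} (hy : y ∈ Ioo 0 1) : ∃ x, gaussCDF x = y := by
  obtain ⟨a, ha⟩ := (tendsto_gaussCDF_atBot.eventually_lt_const hy.1).exists
  obtain ⟨b, hb⟩ := (tendsto_gaussCDF_atTop.eventually_const_lt hy.2).exists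
  exact intermediate_value_univ a b continuous_gaussCDF ⟨ha.le, hb.le⟩

lemma gaussCDFInv_gaussCDF (x : ℝ) : gaussCDFInv (gaussCDF x) = x := by
  have h : {z | gaussCDF z ≤ gaussCDF x} = Iic x := by
    ext z
    exact strictMono_gaussCDF.le_iff_le
  rw [gaussCDFInv, h, csSup_Iic]

lemma gaussCDF_gaussCDFInv {y : ℝ} (hy : y ∈ Ioo 0 1) : gaussCDF (gaussCDFInv y) = y := by
  obtain ⟨x, rfl⟩ := exists_gaussCDF_eq hy
  rw [gaussCDFInv_gaussCDF]

lemma gaussCDFInv_one_sub {y : ℝ} (hy : y ∈ Ioo 0 1) :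
    gaussCDFInv (1 - y) = -gaussCDFInv y := by
  have h : gaussCDF (-gaussCDFInv y) = 1 - y := by rw [gaussCDF_neg, gaussCDF_gaussCDFInv hy]
  rw [← h, gaussCDFInv_gaussCDF]

lemma tendsto_gaussCDFInv_nhdsGT_zero : Tendsto gaussCDFInv (𝓝[>] 0) atBot := by
  refine tendsto_atBot.2 fun K => ?_
  filter_upwards [Ioo_mem_nhdsGT (gaussCDF_pos K)] with y hy
  have hy' : y ∈ Ioo 0 1 := ⟨hy.1, hy.2.trans (gaussCDF_lt_one K)⟩
  rw [← strictMono_gaussCDF.le_iff_le, gaussCDF_gaussCDFInv hy']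
  exact hy.2.le

lemma tendsto_sq_inv_atBot : Tendsto (fun x : ℝ => (x ^ 2)⁻¹) atBot (𝓝 0) :=
  tendsto_inv_atTop_zero.comp <| (tendsto_pow_atTop two_ne_zero).comp tendsto_neg_atBot_atTop
    |>.congr fun x => by simp

lemma tendsto_gaussPDF_div_neg_atBot : Tendsto (fun x => gaussPDF x / -x) atBot (𝓝 0) := by
  have h := tendsto_gaussPDF_atBot.mul (tendsto_inv_atTop_zero.comp tendsto_neg_atBot_atTop)
  rw [mul_zero] at h
  exact h.congr fun x => by simp [div_eq_mul_inv]

lemma hasDerivAt_gaussPDF_div_neg {x : ℝ} (hx : x ≠ 0) :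
    HasDerivAt (fun u => gaussPDF u / -u) (gaussPDF x * (1 + (x ^ 2)⁻¹)) x :=
  ((hasDerivAt_gaussPDF x).div (hasDerivAt_neg x) (neg_ne_zero.2 hx)).congr_deriv
    (by field_simp; ring)

lemma isEquivalent_gaussCDF_atBot : gaussCDF ~[atBot] fun x => gaussPDF x / -x := by
  have hderiv_ratio :
      Tendsto (fun x => gaussPDF x / (gaussPDF x * (1 + (x ^ 2)⁻¹))) atBot (𝓝 1) := by
    have h := (tendsto_sq_inv_atBot.const_add 1).inv₀ (by norm_num)
    rw [add_zero, inv_one] at h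
    exact h.congr fun x => by rw [div_mul_cancel_left₀ (gaussPDF_pos x).ne']
  refine isEquivalent_of_tendsto_one <| HasDerivAt.lhopital_zero_atBot
    (Eventually.of_forall hasDerivAt_gaussCDF) ?_ ?_ tendsto_gaussCDF_atBot
    tendsto_gaussPDF_div_neg_atBot hderiv_ratio
  · filter_upwards [eventually_lt_atBot 0] with x hx using hasDerivAt_gaussPDF_div_neg hx.ne
  · exact Eventually.of_forall fun x => (mul_pos (gaussPDF_pos x) (by positivity)).ne'

lemma isLittleO_two_mul_log_neg_add_const_sq_atBot (c : ℝ) :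
    (fun x : ℝ => 2 * log (-x) + c) =o[atBot] fun x => x ^ 2 := by
  have h : (fun t : ℝ => 2 * log t + c) =o[atTop] fun t => t ^ 2 := by
    have hlin : (fun t : ℝ => 2 * log t + c) =o[atTop] id :=
      (isLittleO_log_id_atTop.const_mul_left 2).add (isLittleO_const_id_atTop c)
    have hsq : (id : ℝ → ℝ) =o[atTop] fun t => t ^ 2 :=
      (isLittleO_pow_pow_atTop_of_lt one_lt_two).congr_left pow_one
    exact hlin.trans hsq
  simpa [Function.comp_def] using h.comp_tendsto tendsto_neg_atBot_atTop

lemma neg_two_mul_log_gaussPDF_div_neg {x : ℝ} (hx : x < 0) :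
    -2 * log (gaussPDF x / -x) = x ^ 2 + (2 * log (-x) + 2 * log √(2 * π)) := by
  rw [log_div (gaussPDF_pos x).ne' (neg_ne_zero.2 hx.ne), log_gaussPDF]
  ring

lemma tendsto_inv_gaussPDF_div_neg_atBot :
    Tendsto (fun x => (gaussPDF x / -x)⁻¹) atBot atTop := by
  refine Tendsto.inv_tendsto_nhdsGT_zero (tendsto_nhdsWithin_iff.2
    ⟨tendsto_gaussPDF_div_neg_atBot, ?_⟩)
  filter_upwards [eventually_lt_atBot 0] with x hx
  exact div_pos (gaussPDF_pos x) (neg_pos.2 hx)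

lemma isEquivalent_neg_two_mul_log_gaussCDF_atBot :
    (fun x => -2 * log (gaussCDF x)) ~[atBot] fun x => x ^ 2 := by
  have hlog := isEquivalent_gaussCDF_atBot.inv.log tendsto_inv_gaussPDF_div_neg_atBot
  have h2 := (IsEquivalent.refl (u := fun _ : ℝ => (2 : ℝ))).mul hlog
  have hsq : (fun x => x ^ 2 + (2 * log (-x) + 2 * log √(2 * π))) ~[atBot] fun x => x ^ 2 :=
    IsEquivalent.refl.add_isLittleO (isLittleO_two_mul_log_neg_add_const_sq_atBot _)
  refine (h2.congr_left ?_).trans (hsq.congr_left ?_)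
  · exact Eventually.of_forall fun x => by
      simp only [Pi.mul_apply, Pi.inv_apply, log_inv]
      ring
  · filter_upwards [eventually_lt_atBot 0] with x hx
    rw [← neg_two_mul_log_gaussPDF_div_neg hx]
    simp only [Pi.mul_apply, Pi.inv_apply, log_inv]
    ring

lemma isEquivalent_sqrt_neg_two_mul_log_gaussCDF_atBot :
    (fun x => √(-2 * log (gaussCDF x))) ~[atBot] fun x => -x := by
  have h := isEquivalent_neg_two_mul_log_gaussCDF_atBot.rpow (fun x => sq_nonneg x) (r := 1 / 2)
  refine (h.congr_left (Eventually.of_forall fun x => ?_)).congr_right ?_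
  · simp only [Pi.pow_apply, sqrt_eq_rpow]
  · filter_upwards [eventually_lt_atBot 0] with x hx
    rw [Pi.pow_apply, ← sqrt_eq_rpow, sqrt_sq_eq_abs, abs_of_neg hx]

lemma gaussCDF_mul_sqrt_neg_two_mul_log_gaussCDF_pos (x : ℝ) :
    0 < gaussCDF x * √(-2 * log (gaussCDF x)) := by
  have hlog : log (gaussCDF x) < 0 := log_neg (gaussCDF_pos x) (gaussCDF_lt_one x)
  exact mul_pos (gaussCDF_pos x) (sqrt_pos.2 (by linarith))

lemma tendsto_gaussPDF_div_gaussCDF_mul_sqrt_atBot :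
    Tendsto (fun x => gaussPDF x / (gaussCDF x * √(-2 * log (gaussCDF x)))) atBot (𝓝 1) := by
  have h := isEquivalent_gaussCDF_atBot.mul isEquivalent_sqrt_neg_two_mul_log_gaussCDF_atBot
  have h' : (fun x => gaussCDF x * √(-2 * log (gaussCDF x))) ~[atBot] gaussPDF := by
    refine h.congr_right ?_
    filter_upwards [eventually_lt_atBot 0] with x hx
    exact div_mul_cancel₀ _ (neg_ne_zero.2 hx.ne)
  exact (isEquivalent_iff_tendsto_one (Eventually.of_forall fun x =>
    (gaussCDF_mul_sqrt_neg_two_mul_log_gaussCDF_pos x).ne')).1 h'.symm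

lemma tendsto_gaussPDF_gaussCDFInv_div_nhdsGT_zero :
    Tendsto (fun y => gaussPDF (gaussCDFInv y) / (y * √(-2 * log y))) (𝓝[>] 0) (𝓝 1) := by
  refine (tendsto_gaussPDF_div_gaussCDF_mul_sqrt_atBot.comp
    tendsto_gaussCDFInv_nhdsGT_zero).congr' ?_
  filter_upwards [Ioo_mem_nhdsGT one_pos] with y hy
  rw [Function.comp_apply, gaussCDF_gaussCDFInv hy]

lemma tendsto_const_sub_nhdsLT (a : ℝ) : Tendsto (fun y : ℝ => a - y) (𝓝[<] a) (𝓝[>] 0) := by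
  refine tendsto_nhdsWithin_iff.2 ⟨?_, ?_⟩
  · exact tendsto_nhdsWithin_of_tendsto_nhds ((continuous_sub_left a).tendsto' a 0 (sub_self a))
  · filter_upwards [self_mem_nhdsWithin] with y hy using sub_pos.2 (mem_Iio.1 hy)

/-- **Lemma 4.2 of Benaïm–Rossignol (second part).**
`g(G⁻¹(y)) ~ y·√(-2 log y)` as `y → 0⁺` and
`g(G⁻¹(y)) ~ (1-y)·√(-2 log(1-y))` as `y → 1⁻`. -/
theorem gaussPDF_gaussCDFInv_asymptotics :
    Tendsto (fun y => gaussPDF (gaussCDFInv y) / (y * Real.sqrt (-2 * Real.log y)))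
      (nhdsWithin 0 (Set.Ioi 0)) (nhds 1) ∧
    Tendsto (fun y => gaussPDF (gaussCDFInv y) /
        ((1 - y) * Real.sqrt (-2 * Real.log (1 - y))))
      (nhdsWithin 1 (Set.Iio 1)) (nhds 1) := by
  refine ⟨tendsto_gaussPDF_gaussCDFInv_div_nhdsGT_zero, ?_⟩
  refine (tendsto_gaussPDF_gaussCDFInv_div_nhdsGT_zero.comp (tendsto_const_sub_nhdsLT 1)).congr' ?_
  filter_upwards [Ioo_mem_nhdsLT one_pos] with y hy
  rw [Function.comp_apply, gaussCDFInv_one_sub hy, gaussPDF_neg]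

end
end

section
/- There exists a constant c>0 such that for every positive integer m there exists a function g_m : {0,1}^{m²} → {0,…,m} with the two properties: (1) for every coordinate q ∈ {1,…,m²}, the discrete gradient satisfies |∇_q g_m| ∈ {0, 1/2} everywhere (equivalently, flipping any single coordinate changes the value of g_m by at most 1); and (2) max_{y∈{0,…,m}} λ({x : g_m(x)=y}) ≤ c/m, where λ is the uniform measure on {0,1}^{m²}. -/
/-!
Take `g = triangleWave (2m) ∘ weight`: the number of `true` coordinates, folded onto `{0, …, m}`
by a triangle wave of period `2m`. Flipping a coordinate moves the weight by one, hence `g` by at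
most one, and a level set of `g` is the set of points whose weight lies in one of two residue
classes mod `2m`.

For a sequence `a` increasing up to `p` and decreasing after it, each element `j` of a
`d`-separated set, except the at most two within distance `d` of `p`, can be charged to the `d`
indices between `j` and `p`, where `a ≥ a j`; hence `d ∑_J a ≤ ∑ a + 2 d a p`. For `a = choose n`
with `n = m²` we have `∑ a = 2^n` and `a p ≤ 4 · 2^n / m`, so each level set has measure `O(1/m)`.
-/

open Finset

namespace Nat

theorem two_mul_add_one_mul_centralBinom_sq_le (n : ℕ) :
    (2 * n + 1) * centralBinom n ^ 2 ≤ 16 ^ n := by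
  induction n with
  | zero => simp
  | succ k ih =>
    refine Nat.le_of_mul_le_mul_left ?_ (by positivity : 0 < (k + 1) ^ 2)
    calc (k + 1) ^ 2 * ((2 * (k + 1) + 1) * centralBinom (k + 1) ^ 2)
        = (2 * k + 3) * ((k + 1) * centralBinom (k + 1)) ^ 2 := by ring
      _ = 4 * (2 * k + 1) * (2 * k + 3) * ((2 * k + 1) * centralBinom k ^ 2) := by
        rw [succ_mul_centralBinom_succ]; ring
      _ ≤ 4 * (2 * k + 1) * (2 * k + 3) * 16 ^ k := Nat.mul_le_mul_left _ ih
      _ ≤ 16 * (k + 1) ^ 2 * 16 ^ k := Nat.mul_le_mul_right _ (by nlinarith)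
      _ = (k + 1) ^ 2 * 16 ^ (k + 1) := by ring

theorem choose_half_sq_mul_le (n : ℕ) : n.choose (n / 2) ^ 2 * n ≤ 16 * 4 ^ n := by
  set k := n / 2
  have hchoose : n.choose k ≤ centralBinom (k + 1) :=
    (choose_le_choose k (by omega : n ≤ 2 * (k + 1))).trans (choose_le_centralBinom k (k + 1))
  calc n.choose k ^ 2 * n ≤ centralBinom (k + 1) ^ 2 * (2 * (k + 1) + 1) := by
        gcongr; omega
    _ ≤ 16 ^ (k + 1) := by rw [mul_comm]; exact two_mul_add_one_mul_centralBinom_sq_le _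
    _ ≤ 16 * 4 ^ n := by
        rw [pow_succ, mul_comm, show (16 : ℕ) = 4 ^ 2 by norm_num, ← pow_mul]
        gcongr <;> omega

theorem choose_sq_half_mul_le (m : ℕ) : (m ^ 2).choose (m ^ 2 / 2) * m ≤ 4 * 2 ^ m ^ 2 := by
  refine (Nat.pow_le_pow_iff_left two_ne_zero).mp ?_
  calc ((m ^ 2).choose (m ^ 2 / 2) * m) ^ 2 = (m ^ 2).choose (m ^ 2 / 2) ^ 2 * m ^ 2 := by ring
    _ ≤ 16 * 4 ^ m ^ 2 := choose_half_sq_mul_le _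
    _ = (4 * 2 ^ m ^ 2) ^ 2 := by rw [mul_pow, ← pow_mul, mul_comm (m ^ 2), pow_mul]; norm_num

theorem choose_monotoneOn_Iic (n : ℕ) : MonotoneOn n.choose (Set.Iic (n / 2)) :=
  monotoneOn_of_le_add_one Set.ordConnected_Iic fun _ _ _ ha =>
    choose_le_succ_of_lt_half_left ha

theorem choose_antitoneOn_Ici (n : ℕ) : AntitoneOn n.choose (Set.Ici (n / 2)) := by
  refine antitoneOn_of_add_one_le Set.ordConnected_Ici fun a _ ha _ => ?_
  refine Nat.le_of_mul_le_mul_right ?_ (succ_pos a)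
  rw [choose_succ_right_eq]
  gcongr
  have : n / 2 ≤ a := ha
  omega

end Nat

theorem mul_sum_le_sum_biUnion {ι κ : Type*} [DecidableEq ι] {a : ι → ℕ} {s : Finset κ}
    {t : κ → Finset ι} {j : κ → ι} {d : ℕ} (hdisj : (↑s : Set κ).PairwiseDisjoint t)
    (hcard : ∀ k ∈ s, #(t k) = d) (hle : ∀ k ∈ s, ∀ i ∈ t k, a (j k) ≤ a i) :
    d * ∑ k ∈ s, a (j k) ≤ ∑ i ∈ s.biUnion t, a i := by
  rw [sum_biUnion hdisj, mul_sum]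
  refine sum_le_sum fun k hk => ?_
  rw [← hcard k hk, ← smul_eq_mul, ← sum_const]
  exact sum_le_sum (hle k hk)

section Unimodal

variable {a : ℕ → ℕ} {p d N : ℕ} {J : Finset ℕ}

theorem card_le_two_of_separated (hsep : ∀ i ∈ J, ∀ j ∈ J, i < j → i + d ≤ j)
    (hJ : ∀ j ∈ J, p < j + d ∧ j < p + d) : #J ≤ 2 := by
  by_contra! hcard
  obtain ⟨i, j, k, hi, hj, hk, hij, hik, hjk⟩ := two_lt_card_iff.mp hcard
  have spread : ∀ u ∈ J, ∀ v ∈ J, u ≠ v → u + d ≤ v ∨ v + d ≤ u := fun u hu v hv huv =>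
    (lt_or_gt_of_ne huv).imp (hsep u hu v hv) (hsep v hv u hu)
  have := spread i hi j hj hij
  have := spread i hi k hk hik
  have := spread j hj k hk hjk
  have := hJ i hi
  have := hJ j hj
  have := hJ k hk
  omega

theorem mul_sum_le_sum_range_of_separated_of_far (hmono : MonotoneOn a (Set.Iic p))
    (hanti : AntitoneOn a (Set.Ici p)) (hpN : p ≤ N) (hJN : J ⊆ range N)
    (hsep : ∀ i ∈ J, ∀ j ∈ J, i < j → i + d ≤ j) (hfar : ∀ j ∈ J, j + d ≤ p ∨ p + d ≤ j) :
    d * ∑ j ∈ J, a j ≤ ∑ i ∈ range N, a i := by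
  let block : ℕ → Finset ℕ := fun j => if j + d ≤ p then Ico j (j + d) else Ioc (j - d) j
  have mem_block : ∀ j ∈ J, ∀ i, i ∈ block j ↔
      (j + d ≤ p ∧ j ≤ i ∧ i < j + d) ∨ (p + d ≤ j ∧ j < i + d ∧ i ≤ j) := by
    intro j hj i
    have := hfar j hj
    by_cases h : j + d ≤ p <;>
      simp only [block, h, if_true, if_false, mem_Ico, mem_Ioc, true_and, false_and, false_or] <;>
      omega
  have card_block : ∀ j ∈ J, #(block j) = d := by
    intro j hj
    have := hfar j hj
    by_cases h : j + d ≤ p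
    · simp only [block, h, if_true, Nat.card_Ico]; omega
    · simp only [block, h, if_false, Nat.card_Ioc]; omega
  have le_block : ∀ j ∈ J, ∀ i ∈ block j, a j ≤ a i := by
    intro j hj i hi
    rcases (mem_block j hj i).mp hi with ⟨_, hji, _⟩ | ⟨_, _, hij⟩
    · exact hmono (Set.mem_Iic.mpr (by omega)) (Set.mem_Iic.mpr (by omega)) hji
    · exact hanti (Set.mem_Ici.mpr (by omega)) (Set.mem_Ici.mpr (by omega)) hij
  have disjoint_block : (↑J : Set ℕ).PairwiseDisjoint block := by
    intro i hi j hj hij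
    refine disjoint_left.mpr fun k hki hkj => ?_
    have := (mem_block i hi k).mp hki
    have := (mem_block j hj k).mp hkj
    rcases lt_or_gt_of_ne hij with h | h
    · have := hsep i hi j hj h; omega
    · have := hsep j hj i hi h; omega
  refine (mul_sum_le_sum_biUnion disjoint_block card_block le_block).trans
    (sum_le_sum_of_subset fun i hi => ?_)
  obtain ⟨j, hj, hij⟩ := mem_biUnion.mp hi
  have := mem_range.mp (hJN hj)
  have := (mem_block j hj i).mp hij
  exact mem_range.mpr (by omega)

theorem mul_sum_le_sum_range_add_of_separated (hmono : MonotoneOn a (Set.Iic p))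
    (hanti : AntitoneOn a (Set.Ici p)) (hpN : p ≤ N) (hJN : J ⊆ range N)
    (hsep : ∀ i ∈ J, ∀ j ∈ J, i < j → i + d ≤ j) :
    d * ∑ j ∈ J, a j ≤ ∑ i ∈ range N, a i + 2 * d * a p := by
  set far : ℕ → Prop := fun j => j + d ≤ p ∨ p + d ≤ j
  have le_peak : ∀ j, a j ≤ a p := fun j => (le_total j p).elim
    (fun h => hmono (Set.mem_Iic.mpr h) (Set.mem_Iic.mpr le_rfl) h)
    (fun h => hanti (Set.mem_Ici.mpr le_rfl) (Set.mem_Ici.mpr h) h)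
  have sep_filter : ∀ q : ℕ → Prop, [DecidablePred q] →
      ∀ i ∈ J.filter q, ∀ j ∈ J.filter q, i < j → i + d ≤ j := fun q _ i hi j hj =>
    hsep i (mem_filter.mp hi).1 j (mem_filter.mp hj).1
  have hfar : d * ∑ j ∈ J.filter far, a j ≤ ∑ i ∈ range N, a i :=
    mul_sum_le_sum_range_of_separated_of_far hmono hanti hpN ((filter_subset _ _).trans hJN)
      (sep_filter far) fun j hj => (mem_filter.mp hj).2
  have hnear : #(J.filter (¬far ·)) ≤ 2 := by
    refine card_le_two_of_separated (p := p) (sep_filter _) fun j hj => ?_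
    have := (mem_filter.mp hj).2
    simp only [far] at this
    omega
  calc d * ∑ j ∈ J, a j
      = d * ∑ j ∈ J.filter far, a j + d * ∑ j ∈ J.filter (¬far ·), a j := by
        rw [← mul_add, sum_filter_add_sum_filter_not]
    _ ≤ ∑ i ∈ range N, a i + d * (#(J.filter (¬far ·)) * a p) := by
        gcongr
        exact sum_le_card_nsmul _ _ _ fun j _ => le_peak j
    _ ≤ ∑ i ∈ range N, a i + d * (2 * a p) := by gcongr
    _ = ∑ i ∈ range N, a i + 2 * d * a p := by ring

end Unimodal

section Weight

variable {ι : Type*} [Fintype ι] [DecidableEq ι]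

def weight (x : ι → Bool) : ℕ := #{i | x i}

theorem weight_update_not (x : ι → Bool) (q : ι) :
    weight (Function.update x q (!x q)) = weight x + 1 ∨
      weight x = weight (Function.update x q (!x q)) + 1 := by
  unfold weight
  cases hq : x q <;> simp only [Bool.not_false, Bool.not_true]
  · left
    have : univ.filter (Function.update x q true ·) = insert q (univ.filter (x ·)) := by
      ext i; by_cases hi : i = q <;> simp [hi]
    rw [this, card_insert_of_notMem (by simp [hq])]
  · right
    have : univ.filter (Function.update x q false ·) = (univ.filter (x ·)).erase q := by
      ext i; by_cases hi : i = q <;> simp [hi]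
    rw [this, card_erase_add_one (by simp [hq])]

theorem card_filter_weight_eq (j : ℕ) :
    #{x : ι → Bool | weight x = j} = (Fintype.card ι).choose j := by
  rw [← card_univ, ← card_powersetCard]
  refine card_nbij' (fun x => univ.filter (x ·)) (fun s i => i ∈ s) ?_ ?_ ?_ ?_
  · intro x hx
    rw [mem_coe, mem_filter] at hx
    simpa [weight] using hx.2
  · intro s hs
    rw [mem_coe, mem_filter]
    simpa [weight] using hs
  · intro x _; ext i; simp
  · intro s _; ext i; simp

theorem card_filter_weight (P : ℕ → Prop) [DecidablePred P] :
    #{x : ι → Bool | P (weight x)} =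
      ∑ j ∈ (range (Fintype.card ι + 1)).filter P, (Fintype.card ι).choose j := by
  rw [card_eq_sum_card_fiberwise (f := weight) (t := (range (Fintype.card ι + 1)).filter P)]
  · refine sum_congr rfl fun j hj => ?_
    rw [← card_filter_weight_eq j, filter_filter]
    congr 1; ext x
    simp only [mem_filter, mem_univ, true_and, and_iff_right_iff_imp]
    exact fun h => h ▸ (mem_filter.mp hj).2
  · intro x hx
    simp only [coe_filter, mem_univ, true_and, Set.mem_ofPred_eq, mem_range] at hx ⊢
    exact ⟨Nat.lt_succ_of_le (card_le_univ _), hx⟩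

end Weight

def triangleWave (d a : ℕ) : ℕ := min (a % d) (d - a % d)

theorem triangleWave_le (d a : ℕ) : triangleWave d a ≤ d / 2 := by
  unfold triangleWave; omega

theorem natAbs_triangleWave_sub_le_one {d a b : ℕ} (h : b = a + 1 ∨ a = b + 1) :
    ((triangleWave d b : ℤ) - triangleWave d a).natAbs ≤ 1 := by
  have step : ∀ c, ((triangleWave d (c + 1) : ℤ) - triangleWave d c).natAbs ≤ 1 := by
    intro c
    rcases Nat.eq_zero_or_pos d with rfl | hd
    · simp [triangleWave]
    have := Nat.mod_lt c hd
    have := Nat.mod_lt (c + 1) hd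
    have hone : 1 % d = 1 ∨ d = 1 := by
      rcases Nat.lt_or_ge 1 d with h | h
      · exact .inl (Nat.mod_eq_of_lt h)
      · exact .inr (by omega)
    have hsucc := Nat.add_mod_eq_ite (k := d) (m := c) (n := 1)
    unfold triangleWave
    split_ifs at hsucc <;> omega
  rcases h with rfl | rfl
  · exact step a
  · rw [← Int.natAbs_neg, neg_sub]; exact step b

theorem mod_eq_or_of_triangleWave_eq {d a y : ℕ} (hd : 0 < d) (h : triangleWave d a = y) :
    a % d = y ∨ a % d = d - y := by
  have := Nat.mod_lt a hd
  unfold triangleWave at h; omega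

theorem Nat.mul_sum_choose_filter_mod_eq_le (n d r : ℕ) :
    d * ∑ j ∈ (range (n + 1)).filter (· % d = r), n.choose j ≤
      2 ^ n + 2 * d * n.choose (n / 2) := by
  rw [← Nat.sum_range_choose n]
  exact mul_sum_le_sum_range_add_of_separated (Nat.choose_monotoneOn_Iic n)
    (Nat.choose_antitoneOn_Ici n) (by omega) (filter_subset _ _) fun i hi j hj hij =>
      Nat.ModEq.add_le_of_lt ((mem_filter.mp hi).2.trans (mem_filter.mp hj).2.symm) hij

theorem Nat.mul_sum_choose_filter_triangleWave_eq_le (n : ℕ) {d : ℕ} (hd : 0 < d) (y : ℕ) :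
    d * ∑ j ∈ (range (n + 1)).filter (triangleWave d · = y), n.choose j ≤
      2 * 2 ^ n + 4 * d * n.choose (n / 2) := by
  set residue : ℕ → Finset ℕ := fun r => (range (n + 1)).filter (· % d = r)
  have hsub : (range (n + 1)).filter (triangleWave d · = y) ⊆ residue y ∪ residue (d - y) := by
    intro j hj
    rw [mem_filter] at hj
    simp only [residue, mem_union, mem_filter]
    rcases mod_eq_or_of_triangleWave_eq hd hj.2 with h | h
    · exact .inl ⟨hj.1, h⟩
    · exact .inr ⟨hj.1, h⟩
  have hsum : ∑ j ∈ (range (n + 1)).filter (triangleWave d · = y), n.choose j ≤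
      ∑ j ∈ residue y, n.choose j + ∑ j ∈ residue (d - y), n.choose j := by
    refine (sum_le_sum_of_subset hsub).trans ?_
    rw [← sum_union_inter]
    exact Nat.le_add_right _ _
  calc d * ∑ j ∈ (range (n + 1)).filter (triangleWave d · = y), n.choose j
      ≤ d * ∑ j ∈ residue y, n.choose j + d * ∑ j ∈ residue (d - y), n.choose j := by
        rw [← mul_add]; exact Nat.mul_le_mul_left d hsum
    _ ≤ 2 * 2 ^ n + 4 * d * n.choose (n / 2) := by
        have hy : d * ∑ j ∈ residue y, n.choose j ≤ 2 ^ n + 2 * d * n.choose (n / 2) :=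
          Nat.mul_sum_choose_filter_mod_eq_le n d y
        have hy' : d * ∑ j ∈ residue (d - y), n.choose j ≤ 2 ^ n + 2 * d * n.choose (n / 2) :=
          Nat.mul_sum_choose_filter_mod_eq_le n d (d - y)
        linarith

/-- **Lemma 4.5 of Benaïm–Rossignol (averaging functions on the cube).**
There is a constant `c > 0` such that for every positive integer `m` there exists
`g_m : {0,1}^{m²} → {0,…,m}` such that (1) flipping any single coordinate changes the
value of `g_m` by at most `1` (i.e. the discrete gradient satisfies `|∇_q g_m| ∈ {0,1/2}`),
and (2) every level set of `g_m` has uniform measure at most `c/m`. -/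
theorem averaging_function_exists :
    ∃ c : ℝ, 0 < c ∧ ∀ m : ℕ, 0 < m →
      ∃ g : (Fin (m^2) → Bool) → ℕ,
        (∀ x, g x ≤ m) ∧
        (∀ x q, ((g (Function.update x q (!x q)) : ℤ) - g x).natAbs ≤ 1) ∧
        (∀ y : ℕ, ((Finset.univ.filter fun x : Fin (m^2) → Bool => g x = y).card : ℝ) /
            2 ^ (m^2) ≤ c / m) := by
  refine ⟨17, by norm_num, fun m hm => ⟨fun x => triangleWave (2 * m) (weight x),
    fun x => ?_, fun x q => natAbs_triangleWave_sub_le_one (weight_update_not x q), fun y => ?_⟩⟩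
  · simpa using triangleWave_le (2 * m) (weight x)
  have hlevel : #{x : Fin (m ^ 2) → Bool | triangleWave (2 * m) (weight x) = y} * m ≤
      17 * 2 ^ m ^ 2 := by
    have hcount := card_filter_weight (ι := Fin (m ^ 2)) (triangleWave (2 * m) · = y)
    rw [Fintype.card_fin] at hcount
    have hsum := Nat.mul_sum_choose_filter_triangleWave_eq_le (m ^ 2) (by omega : 0 < 2 * m) y
    have hmiddle := Nat.choose_sq_half_mul_le m
    rw [← hcount] at hsum
    nlinarith
  rw [div_le_div_iff₀ (by positivity) (by positivity)]
  exact_mod_cast hlevel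
end

section
/- Let d≥2, let ν be a probability measure on R⁺ absolutely continuous with respect to Lebesgue measure, and let μ = ν^⊗E be the corresponding i.i.d. product measure on edge passage times of Z^d. Then for every vertex v ≠ 0, μ-almost surely there is exactly one geodesic from 0 to v, i.e. exactly one path γ from 0 to v achieving d_x(0,v) = Σ_{e∈γ} x_e (assuming, as holds in this setting, that at least one geodesic exists almost surely). -/
/-!
Once all passage times are positive, a geodesic has no repeated vertex (erasing a loop would make
it shorter), and a self-avoiding path is determined by its starting point and its multiset of
edges, because its only edge at the starting point is the first one. So two distinct geodesics
between the same endpoints have distinct edge multisets with the same total weight. For two fixed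
distinct multisets, equality of the weights is a nontrivial linear relation between finitely many
independent atomless coordinates, which by Fubini (in a coordinate with nonzero coefficient) has
probability zero; there are only countably many pairs of multisets.
-/

open MeasureTheory Set

noncomputable section

/-- The edges of `ℤ^d`, parametrized by their lower endpoint and direction. -/
abbrev LatticeEdge (d : ℕ) := (Fin d → ℤ) × Fin d

/-- The `i`-th standard basis vector of `ℤ^d`. -/
def unitVec (d : ℕ) (i : Fin d) : Fin d → ℤ := fun j => if j = i then 1 else 0

/-- Nearest-neighbour adjacency in `ℤ^d`. -/
def latticeAdj {d : ℕ} (u w : Fin d → ℤ) : Prop :=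
  (∃ i, w = u + unitVec d i) ∨ (∃ i, u = w + unitVec d i)

/-- The passage time of the (nearest-neighbour) step from `u` to `w`. -/
def stepTime {d : ℕ} (x : LatticeEdge d → ℝ) (u w : Fin d → ℤ) : ℝ :=
  ∑ i : Fin d, ((if w = u + unitVec d i then x (u, i) else 0) +
    (if u = w + unitVec d i then x (w, i) else 0))

/-- `p` is a lattice path from `u` to `w`. -/
def IsLatticePath {d : ℕ} (p : List (Fin d → ℤ)) (u w : Fin d → ℤ) : Prop :=
  p.head? = some u ∧ p.getLast? = some w ∧ p.Chain' latticeAdj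

/-- The passage time `Σ_{e∈α} x_e` of the path `p`. -/
def pathTime {d : ℕ} (x : LatticeEdge d → ℝ) (p : List (Fin d → ℤ)) : ℝ :=
  ((p.zip p.tail).map fun q => stepTime x q.1 q.2).sum

/-- The first passage time `d_x(u,w) = inf_{α:{u,w}} Σ_{e∈α} x_e`. -/
def fppDist {d : ℕ} (x : LatticeEdge d → ℝ) (u w : Fin d → ℤ) : ℝ :=
  sInf {r | ∃ p, IsLatticePath p u w ∧ pathTime x p = r}

/-- `μ` is the product measure `ν^ι`: all its finite-dimensional marginals are the
corresponding finite product measures. -/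
def IsProductMeasure {ι X : Type*} [MeasurableSpace X] (μ : Measure (ι → X))
    (ν : Measure X) : Prop :=
  ∀ s : Finset ι, μ.map (fun x (i : s) => x i) = Measure.pi (fun _ : s => ν)

section Lattice

variable {d : ℕ}

/-- For neighbours `u`, `w` this is the single edge joining them; in general it is the multiset of
edges whose weights `stepTime x u w` adds up. -/
def stepEdges (u w : Fin d → ℤ) : Multiset (LatticeEdge d) :=
  ((Finset.univ.filter fun i => w = u + unitVec d i).val.map fun i => (u, i)) +
    (Finset.univ.filter fun i => u = w + unitVec d i).val.map fun i => (w, i)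

def pathEdges (p : List (Fin d → ℤ)) : Multiset (LatticeEdge d) :=
  ((p.zip p.tail).map fun q => stepEdges q.1 q.2).sum

lemma unitVec_ne_zero (i : Fin d) : unitVec d i ≠ 0 := fun h => by
  simpa [unitVec] using congrFun h i

lemma mem_stepEdges {u w : Fin d → ℤ} {e : LatticeEdge d} :
    e ∈ stepEdges u w ↔
      (u = e.1 ∧ w = e.1 + unitVec d e.2) ∨ (w = e.1 ∧ u = e.1 + unitVec d e.2) := by
  obtain ⟨a, i⟩ := e
  simp only [stepEdges, Multiset.mem_add, Multiset.mem_map, Finset.mem_val, Finset.mem_filter,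
    Finset.mem_univ, true_and, Prod.mk.injEq]
  constructor
  · rintro (⟨j, hj, rfl, rfl⟩ | ⟨j, hj, rfl, rfl⟩)
    · exact Or.inl ⟨rfl, hj⟩
    · exact Or.inr ⟨rfl, hj⟩
  · rintro (⟨rfl, hj⟩ | ⟨rfl, hj⟩)
    · exact Or.inl ⟨i, hj, rfl, rfl⟩
    · exact Or.inr ⟨i, hj, rfl, rfl⟩

lemma stepEdges_ne_zero {u w : Fin d → ℤ} (h : latticeAdj u w) : stepEdges u w ≠ 0 := by
  rintro h0
  rcases h with ⟨i, hi⟩ | ⟨i, hi⟩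
  · have hmem : (u, i) ∈ stepEdges u w := mem_stepEdges.2 (Or.inl ⟨rfl, hi⟩)
    simp [h0] at hmem
  · have hmem : (w, i) ∈ stepEdges u w := mem_stepEdges.2 (Or.inr ⟨rfl, hi⟩)
    simp [h0] at hmem

lemma eq_of_mem_stepEdges {u w w' : Fin d → ℤ} {e : LatticeEdge d} (h : e ∈ stepEdges u w)
    (h' : e ∈ stepEdges u w') : w = w' := by
  rcases mem_stepEdges.1 h with ⟨rfl, rfl⟩ | ⟨rfl, rfl⟩ <;>
    rcases mem_stepEdges.1 h' with ⟨h₁, rfl⟩ | ⟨rfl, h₁⟩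
  · rfl
  · exact absurd (left_eq_add.1 h₁) (unitVec_ne_zero _)
  · exact absurd (add_eq_left.1 h₁) (unitVec_ne_zero _)
  · rfl

lemma stepTime_eq_sum_map_stepEdges (x : LatticeEdge d → ℝ) (u w : Fin d → ℤ) :
    stepTime x u w = ((stepEdges u w).map x).sum := by
  simp only [stepEdges, Multiset.map_add, Multiset.sum_add, Multiset.map_map]
  rw [stepTime, Finset.sum_add_distrib, ← Finset.sum_filter, ← Finset.sum_filter]
  rfl

@[simp] lemma pathEdges_nil : pathEdges ([] : List (Fin d → ℤ)) = 0 := rfl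

@[simp] lemma pathEdges_singleton (a : Fin d → ℤ) : pathEdges [a] = 0 := rfl

@[simp] lemma pathEdges_cons_cons (a b : Fin d → ℤ) (l : List (Fin d → ℤ)) :
    pathEdges (a :: b :: l) = stepEdges a b + pathEdges (b :: l) := by
  simp [pathEdges]

lemma pathTime_eq_sum_map_pathEdges (x : LatticeEdge d → ℝ) (p : List (Fin d → ℤ)) :
    pathTime x p = ((pathEdges p).map x).sum := by
  simp only [pathTime, pathEdges, stepTime_eq_sum_map_stepEdges]
  induction p.zip p.tail <;> simp [*]

lemma pathEdges_append_cons (s : List (Fin d → ℤ)) (a : Fin d → ℤ) (t : List (Fin d → ℤ)) :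
    pathEdges (s ++ a :: t) = pathEdges (s ++ [a]) + pathEdges (a :: t) := by
  induction s with
  | nil => simp
  | cons b s ih =>
    cases s with
    | nil => simp
    | cons c s =>
      simp only [List.cons_append] at ih ⊢
      rw [pathEdges_cons_cons, pathEdges_cons_cons, ih, add_assoc]

lemma mem_of_mem_pathEdges {p : List (Fin d → ℤ)} {e : LatticeEdge d} (h : e ∈ pathEdges p) :
    e.1 ∈ p ∧ e.1 + unitVec d e.2 ∈ p := by
  induction p with
  | nil => simp at h
  | cons a p ih =>
    cases p with
    | nil => simp at h
    | cons b p =>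
      rw [pathEdges_cons_cons, Multiset.mem_add] at h
      rcases h with h | h
      · rcases mem_stepEdges.1 h with ⟨rfl, rfl⟩ | ⟨rfl, rfl⟩ <;> simp
      · exact (ih h).imp (List.mem_cons_of_mem a) (List.mem_cons_of_mem a)

lemma pathEdges_cons_eq_zero_iff {u : Fin d → ℤ} {p : List (Fin d → ℤ)}
    (h : (u :: p).IsChain latticeAdj) : pathEdges (u :: p) = 0 ↔ p = [] := by
  cases p with
  | nil => simp
  | cons a p => simp [stepEdges_ne_zero (List.isChain_cons_cons.1 h).1]

theorem eq_of_pathEdges_eq {p q : List (Fin d → ℤ)} (hp : p.IsChain latticeAdj)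
    (hq : q.IsChain latticeAdj) (hpn : p.Nodup) (hqn : q.Nodup) (hhead : p.head? = q.head?)
    (h : pathEdges p = pathEdges q) : p = q := by
  induction p generalizing q with
  | nil => exact (List.head?_eq_none_iff.1 hhead.symm).symm
  | cons u p ih =>
    obtain ⟨q, rfl⟩ := List.head?_eq_some_iff.1 hhead.symm
    have hnil : p = [] ↔ q = [] := by
      rw [← pathEdges_cons_eq_zero_iff hp, ← pathEdges_cons_eq_zero_iff hq, h]
    rcases p with _ | ⟨a, p⟩ <;> rcases q with _ | ⟨b, q⟩
    · rfl
    · simp at hnil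
    · simp at hnil
    rw [pathEdges_cons_cons, pathEdges_cons_cons] at h
    obtain ⟨e, he⟩ :=
      Multiset.exists_mem_of_ne_zero (stepEdges_ne_zero (List.isChain_cons_cons.1 hp).1)
    -- `u :: b :: q` is self-avoiding, so its only edge at `u` is the first one
    have hab : a = b := by
      rcases Multiset.mem_add.1 (h ▸ Multiset.mem_add.2 (Or.inl he)) with h' | h'
      · exact eq_of_mem_stepEdges he h'
      · refine absurd ?_ (List.nodup_cons.1 hqn).1
        rcases mem_stepEdges.1 he with ⟨rfl, -⟩ | ⟨-, rfl⟩
        exacts [(mem_of_mem_pathEdges h').1, (mem_of_mem_pathEdges h').2]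
    subst hab
    exact congrArg (u :: ·) (ih hp.tail hq.tail (List.nodup_cons.1 hpn).2
      (List.nodup_cons.1 hqn).2 rfl (add_left_cancel h))

end Lattice

lemma List.exists_eq_append_cons_append_cons_of_not_nodup {α : Type*} {l : List α}
    (h : ¬ l.Nodup) : ∃ s a m t, l = s ++ a :: (m ++ a :: t) := by
  obtain ⟨a, ha⟩ : ∃ a, List.Sublist [a, a] l := by simpa [List.nodup_iff_sublist] using h
  obtain ⟨r₁, r₂, rfl, h₁, h₂⟩ := List.cons_sublist_iff.1 ha
  obtain ⟨s, m, rfl⟩ := List.append_of_mem h₁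
  obtain ⟨m', t, rfl⟩ := List.append_of_mem (List.singleton_sublist.1 h₂)
  exact ⟨s, a, m ++ m', t, by simp⟩

section Geodesic

variable {d : ℕ} {x : LatticeEdge d → ℝ}

lemma pathEdges_append_cons_append_cons (s : List (Fin d → ℤ)) (a : Fin d → ℤ)
    (m t : List (Fin d → ℤ)) :
    pathEdges (s ++ a :: (m ++ a :: t)) =
      pathEdges (s ++ a :: t) + pathEdges (a :: (m ++ [a])) := by
  rw [pathEdges_append_cons s a (m ++ a :: t), pathEdges_append_cons s a t,
    ← List.cons_append, pathEdges_append_cons (a :: m) a t, List.cons_append, add_right_comm,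
    add_assoc]

lemma IsLatticePath.erase_loop {s m t : List (Fin d → ℤ)} {a u w : Fin d → ℤ}
    (h : IsLatticePath (s ++ a :: (m ++ a :: t)) u w) : IsLatticePath (s ++ a :: t) u w := by
  obtain ⟨hhead, hlast, hchain⟩ := h
  have hlast' : (s ++ a :: t).getLast? = (s ++ a :: (m ++ a :: t)).getLast? := by
    rw [show s ++ a :: (m ++ a :: t) = (s ++ a :: m) ++ a :: t by simp,
      List.getLast?_append_of_ne_nil _ (List.cons_ne_nil _ _),
      List.getLast?_append_of_ne_nil _ (List.cons_ne_nil _ _)]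
  refine ⟨by simpa using hhead, hlast'.trans hlast, ?_⟩
  obtain ⟨h₁, h₂, h₃⟩ := List.isChain_append.1 hchain
  exact List.isChain_append.2
    ⟨h₁, h₂.suffix ((List.suffix_append m _).trans (List.suffix_cons a _)), by simpa using h₃⟩

lemma pathTime_nonneg (hx : ∀ e, 0 ≤ x e) (p : List (Fin d → ℤ)) : 0 ≤ pathTime x p := by
  rw [pathTime_eq_sum_map_pathEdges]
  exact Multiset.sum_nonneg fun _ h => by
    obtain ⟨e, -, rfl⟩ := Multiset.mem_map.1 h
    exact hx e

lemma pathTime_erase_loop_lt (hx : ∀ e, 0 < x e) {s m t : List (Fin d → ℤ)} {a : Fin d → ℤ}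
    (h : (s ++ a :: (m ++ a :: t)).IsChain latticeAdj) :
    pathTime x (s ++ a :: t) < pathTime x (s ++ a :: (m ++ a :: t)) := by
  have hloop : (a :: (m ++ [a])).IsChain latticeAdj := h.infix ⟨s, t, by simp⟩
  have hne : pathEdges (a :: (m ++ [a])) ≠ 0 := by simp [pathEdges_cons_eq_zero_iff hloop]
  have hpos : 0 < ((pathEdges (a :: (m ++ [a]))).map x).sum := by
    simpa using Multiset.sum_lt_sum_of_nonempty hne (fun e _ => hx e) (f := fun _ => 0)
  rw [pathTime_eq_sum_map_pathEdges, pathTime_eq_sum_map_pathEdges,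
    pathEdges_append_cons_append_cons, Multiset.map_add, Multiset.sum_add]
  exact lt_add_of_pos_right _ hpos

lemma fppDist_le_pathTime (hx : ∀ e, 0 ≤ x e) {p : List (Fin d → ℤ)} {u w : Fin d → ℤ}
    (hp : IsLatticePath p u w) : fppDist x u w ≤ pathTime x p :=
  csInf_le ⟨0, by rintro _ ⟨q, -, rfl⟩; exact pathTime_nonneg hx q⟩ ⟨p, hp, rfl⟩

theorem IsLatticePath.nodup_of_pathTime_eq_fppDist (hx : ∀ e, 0 < x e)
    {p : List (Fin d → ℤ)} {u w : Fin d → ℤ} (hp : IsLatticePath p u w)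
    (hgeo : pathTime x p = fppDist x u w) : p.Nodup := by
  by_contra hnd
  obtain ⟨s, a, m, t, rfl⟩ := List.exists_eq_append_cons_append_cons_of_not_nodup hnd
  have hle := fppDist_le_pathTime (fun e => (hx e).le) hp.erase_loop
  have hlt := pathTime_erase_loop_lt hx hp.2.2
  linarith

theorem IsLatticePath.eq_of_pathTime_eq_fppDist (hx : ∀ e, 0 < x e)
    (hinj : Function.Injective fun m : Multiset (LatticeEdge d) => (m.map x).sum)
    {p q : List (Fin d → ℤ)} {u w : Fin d → ℤ} (hp : IsLatticePath p u w)
    (hq : IsLatticePath q u w) (hpt : pathTime x p = fppDist x u w)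
    (hqt : pathTime x q = fppDist x u w) : p = q := by
  refine eq_of_pathEdges_eq hp.2.2 hq.2.2 (hp.nodup_of_pathTime_eq_fppDist hx hpt)
    (hq.nodup_of_pathTime_eq_fppDist hx hqt) (hp.1.trans hq.1.symm) (hinj ?_)
  simp only [← pathTime_eq_sum_map_pathEdges, hpt, hqt]

end Geodesic

section ProductMeasure

variable {ι : Type*} {ν : Measure ℝ}

theorem MeasureTheory.Measure.pi_setOf_sum_mul_eq_zero [Fintype ι] [SigmaFinite ν]
    [NullSingletonClass ν] {c : ι → ℝ} {i₀ : ι} (hc : c i₀ ≠ 0) :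
    Measure.pi (fun _ : ι => ν) {y | ∑ i, c i * y i = 0} = 0 := by
  classical
  let e := MeasurableEquiv.piEquivPiSubtypeProd (fun _ : ι => ℝ) (· ≠ i₀)
  have hA : MeasurableSet {y : ι → ℝ | ∑ i, c i * y i = 0} :=
    measurableSet_eq_fun (by fun_prop) measurable_const
  rw [← (measurePreserving_piEquivPiSubtypeProd (fun _ => ν) (· ≠ i₀)).symm.measure_preimage
    hA.nullMeasurableSet, Measure.measure_prod_null (e.symm.measurable hA)]
  refine Filter.Eventually.of_forall fun y => ?_
  -- on the fibre over `y`, the relation pins down the coordinate `i₀`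
  let j₀ : {i // ¬ i ≠ i₀} := ⟨i₀, not_not.2 rfl⟩
  have hrest : ∀ z, ∑ i ∈ Finset.univ.erase i₀, c i * e.symm (y, z) i =
      ∑ i ∈ Finset.univ.erase i₀, c i * e.symm (y, 0) i := fun z =>
    Finset.sum_congr rfl fun i hi => by simp [e, Finset.ne_of_mem_erase hi]
  refine measure_mono_null (fun z hz => ?_) (Measure.pi_hyperplane _ j₀
    (-(∑ i ∈ Finset.univ.erase i₀, c i * e.symm (y, 0) i) / c i₀))
  have hz : ∑ i, c i * e.symm (y, z) i = 0 := hz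
  rw [← Finset.add_sum_erase _ _ (Finset.mem_univ i₀), hrest] at hz
  have hz₀ : e.symm (y, z) i₀ = z j₀ := by simp [e, j₀]
  show z j₀ = _
  rw [eq_div_iff hc]
  linear_combination hz - c i₀ * hz₀

lemma IsProductMeasure.ae_forall_apply [SigmaFinite ν] [Countable ι] {μ : Measure (ι → ℝ)}
    (hμ : IsProductMeasure μ ν) {P : ℝ → Prop} (h : ∀ᵐ t ∂ν, P t) : ∀ᵐ x ∂μ, ∀ i, P (x i) := by
  refine ae_all_iff.2 fun i => ?_
  have hf : Measurable fun (x : ι → ℝ) (j : ({i} : Finset ι)) => x j := by fun_prop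
  refine ae_of_ae_map hf.aemeasurable (p := fun y => P (y ⟨i, Finset.mem_singleton_self i⟩)) ?_
  rw [hμ {i}]
  exact Measure.tendsto_eval_ae_ae.eventually h

lemma IsProductMeasure.ae_sum_mul_ne_zero [SigmaFinite ν] [NullSingletonClass ν]
    {μ : Measure (ι → ℝ)} (hμ : IsProductMeasure μ ν) {s : Finset ι} {c : ι → ℝ} {i₀ : ι}
    (hi₀ : i₀ ∈ s) (hc : c i₀ ≠ 0) : ∀ᵐ x ∂μ, ∑ i ∈ s, c i * x i ≠ 0 := by
  have hf : Measurable fun (x : ι → ℝ) (i : s) => x i := by fun_prop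
  have h : ∀ᵐ y ∂μ.map fun (x : ι → ℝ) (i : s) => x i, ∑ i : s, c i * y i ≠ 0 := by
    rw [hμ s, ae_iff]
    simpa using Measure.pi_setOf_sum_mul_eq_zero (ν := ν) (c := fun i : s => c i)
      (i₀ := ⟨i₀, hi₀⟩) hc
  filter_upwards [ae_of_ae_map hf.aemeasurable h] with x hx
  rwa [← Finset.sum_coe_sort]

lemma Multiset.sum_map_eq_sum_count_nsmul {M : Type*} [AddCommMonoid M] [DecidableEq ι]
    (m : Multiset ι) (f : ι → M) {s : Finset ι} (hs : m.toFinset ⊆ s) :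
    (m.map f).sum = ∑ i ∈ s, m.count i • f i := by
  rw [Finset.sum_multiset_map_count]
  exact Finset.sum_subset hs fun i _ hi => by
    rw [Multiset.count_eq_zero.2 fun h => hi (Multiset.mem_toFinset.2 h), zero_smul]

lemma IsProductMeasure.ae_injective_sum_map [SigmaFinite ν] [NullSingletonClass ν] [Countable ι]
    {μ : Measure (ι → ℝ)} (hμ : IsProductMeasure μ ν) :
    ∀ᵐ x ∂μ, Function.Injective fun m : Multiset ι => (m.map x).sum := by
  classical
  have hne : ∀ m m' : Multiset ι, m ≠ m' → ∀ᵐ x ∂μ, (m.map x).sum ≠ (m'.map x).sum := by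
    intro m m' hmm'
    obtain ⟨i₀, hi₀⟩ : ∃ i, m.count i ≠ m'.count i := by
      by_contra! h
      exact hmm' (Multiset.ext.2 h)
    let s := (m + m').toFinset
    have hi₀s : i₀ ∈ s := by
      by_contra h
      simp only [s, Multiset.mem_toFinset, Multiset.mem_add, not_or] at h
      exact hi₀ (by rw [Multiset.count_eq_zero.2 h.1, Multiset.count_eq_zero.2 h.2])
    filter_upwards [hμ.ae_sum_mul_ne_zero hi₀s (c := fun i => (m.count i : ℝ) - m'.count i)
      (sub_ne_zero.2 (by exact_mod_cast hi₀))] with x hx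
    rw [Multiset.sum_map_eq_sum_count_nsmul m x (s := s) (by simp [s]),
      Multiset.sum_map_eq_sum_count_nsmul m' x (s := s) (by simp [s]), Ne, ← sub_eq_zero,
      ← Finset.sum_sub_distrib]
    simpa [sub_mul] using hx
  refine ae_all_iff.2 fun m => ae_all_iff.2 fun m' => ?_
  by_cases hmm' : m = m'
  · exact ae_of_all _ fun _ _ => hmm'
  · filter_upwards [hne m m' hmm'] with x hx heq using absurd heq hx

end ProductMeasure

theorem fpp_geodesic_unique_general
    (d : ℕ)
    (ν : Measure ℝ) [IsProbabilityMeasure ν]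
    (hac : ν ≪ volume) (hsupp : ν (Set.Iio 0) = 0)
    (μ : Measure (LatticeEdge d → ℝ))
    (hμ : IsProductMeasure μ ν)
    (v : Fin d → ℤ)
    (hex : ∀ᵐ x ∂μ, ∃ p, IsLatticePath p 0 v ∧ pathTime x p = fppDist x 0 v) :
    ∀ᵐ x ∂μ, ∃! p : List (Fin d → ℤ),
      IsLatticePath p 0 v ∧ pathTime x p = fppDist x 0 v := by
  have : NullSingletonClass ν := ⟨fun _ => hac Real.volume_singleton⟩
  have hpos : ∀ᵐ t ∂ν, 0 < t := by
    rw [ae_iff]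
    simpa [← Iic_def, measure_congr Iio_ae_eq_Iic] using hsupp
  filter_upwards [hex, hμ.ae_forall_apply hpos, hμ.ae_injective_sum_map] with x ⟨p, hp⟩ hx hinj
  exact ⟨p, hp, fun q hq => hq.1.eq_of_pathTime_eq_fppDist hx hinj hp.1 hq.2 hp.2⟩

/-- **Almost sure uniqueness of geodesics** (used in the proof of Lemma 4.6 of
Benaïm–Rossignol).  Let `d ≥ 2`, `ν` a probability measure on `ℝ⁺` absolutely continuous
with respect to Lebesgue measure, and `μ = ν^⊗E`.  Then for every vertex `v ≠ 0`,
`μ`-almost surely there is exactly one geodesic from `0` to `v`, i.e. exactly one path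
achieving `d_x(0,v)` (given that, as holds in this setting, at least one geodesic exists
almost surely). -/
theorem fpp_geodesic_unique
    (d : ℕ) (hd : 2 ≤ d)
    (ν : Measure ℝ) [IsProbabilityMeasure ν]
    (hac : ν ≪ volume) (hsupp : ν (Set.Iio 0) = 0)
    (μ : Measure (LatticeEdge d → ℝ)) [IsProbabilityMeasure μ]
    (hμ : IsProductMeasure μ ν)
    (v : Fin d → ℤ) (hv : v ≠ 0)
    (hex : ∀ᵐ x ∂μ, ∃ p, IsLatticePath p 0 v ∧ pathTime x p = fppDist x 0 v) :
    ∀ᵐ x ∂μ, ∃! p : List (Fin d → ℤ),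
      IsLatticePath p 0 v ∧ pathTime x p = fppDist x 0 v :=
  fpp_geodesic_unique_general d ν hac hsupp μ hμ v hex

end
end
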